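/- arXiv:math/0409189 — 5 statements merged into one kernel-verified Lean document; each statement's English description precedes it below -/
import Mathlib

section
/- Let V be a finite-dimensional real vector space with a nondegenerate symmetric bilinear form B. Suppose S : V → End(V) is a linear map such that for every v ∈ V, S(v) is self-adjoint with respect to B (i.e. B(S(v)x, y) = B(x, S(v)y) for all x, y) and S(v)v = 0. Then S(v) = 0 for all v ∈ V. -/
theorem stmt4 {V : Type*} [AddCommGroup V] [Module ℝ V] [FiniteDimensional ℝ V]
    (B : V →ₗ[ℝ] V →ₗ[ℝ] ℝ)
    (hsymm : ∀ x y, B x y = B y x)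
    (hnd : ∀ x, (∀ y, B x y = 0) → x = 0)
    (S : V →ₗ[ℝ] V →ₗ[ℝ] V)
    (hsa : ∀ v x y, B (S v x) y = B x (S v y))
    (hvv : ∀ v, S v v = 0) :
    S = 0 := by
  have hpol : ∀ u v, S u v = - S v u := by
    intro u v
    have h := hvv (u + v)
    simp only [map_add, LinearMap.add_apply, hvv, add_zero, zero_add] at h
    linear_combination (norm := abel) h
  have hT1 : ∀ u v w, B (S u v) w = B (S u w) v := by
    intro u v w
    rw [hsa u v w, hsymm]
  have hT2 : ∀ u v w, B (S u v) w = - B (S v u) w := by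
    intro u v w
    rw [hpol u v]
    simp
  have hzero : ∀ u v w, B (S u v) w = 0 := by
    intro u v w
    have : B (S u v) w = - B (S u v) w := by
      calc B (S u v) w = B (S u w) v := hT1 u v w
        _ = - B (S w u) v := hT2 u w v
        _ = - B (S w v) u := by rw [hT1 w u v]
        _ = B (S v w) u := by rw [hT2 w v u]; ring
        _ = B (S v u) w := hT1 v w u
        _ = - B (S u v) w := by rw [hT2 u v w]; ring
    linarith
  ext u v
  exact (by simpa using hnd (S u v) (fun w => hzero u v w) : S u v = 0) ▸ rfl
end

section
/- Let V be a finite-dimensional real vector space and S : V → End(V) a continuous map such that S(λv) = λ^k S(v) for all λ > 0 (homogeneity of positive degree k ≥ 1). Suppose v ∈ V has the property that for every λ ≠ 0 there is an invertible T : V → V with T(v) = λv and S(λv) = T ∘ S(v) ∘ T⁻¹. Then S(v) is nilpotent. -/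
/-!
Taking `c = 2`, homogeneity and the hypothesis make `2 ^ k • S v` conjugate to `S v`, so the two
have the same characteristic polynomial. The coefficient of `X ^ i` in the characteristic
polynomial is a homogeneous polynomial function of degree `n - i` on `End V` (`n = dim V`), so
scaling by `a = 2 ^ k` multiplies it by `a ^ (n - i)`. Since `a` is not a root of unity, every
coefficient below the leading one vanishes: the characteristic polynomial is `X ^ n`, and
`S v` is nilpotent.
-/

open Polynomial Module

theorem MvPolynomial.IsHomogeneous.eval_smul {σ R : Type*} [CommSemiring R]
    {p : MvPolynomial σ R} {m : ℕ} (hp : p.IsHomogeneous m) (c : R) (x : σ → R) :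
    eval (c • x) p = c ^ m * eval x p := by
  simp only [eval_eq, Finset.mul_sum]
  refine Finset.sum_congr rfl fun d hd => ?_
  have hdeg : ∑ i ∈ d.support, d i = m := by
    simpa [Finsupp.weight, Finsupp.linearCombination, Finsupp.sum] using
      hp (mem_support_iff.mp hd)
  simp only [Pi.smul_apply, smul_eq_mul, mul_pow, Finset.prod_mul_distrib,
    Finset.prod_pow_eq_pow_sum, hdeg]
  ring

section charpoly

variable {R M : Type*} [CommRing R] [AddCommGroup M] [Module R M] [Module.Free R M]
  [Module.Finite R M]

theorem LinearMap.charpoly_smul_coeff [Nontrivial R] (f : End R M) (a : R) {i j : ℕ}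
    (hij : i + j = finrank R M) :
    (a • f).charpoly.coeff i = a ^ j * f.charpoly.coeff i := by
  classical
  let b := Module.Free.chooseBasis R (End R M)
  have hom := (LinearMap.id : End R M →ₗ[R] End R M).polyCharpoly_coeff_isHomogeneous b i j hij
  rw [← LinearMap.id_apply (R := R) (a • f), ← polyCharpoly_coeff_eval _ b,
    ← LinearMap.id_apply (R := R) f, ← polyCharpoly_coeff_eval _ b, map_smul, Finsupp.coe_smul,
    hom.eval_smul, LinearMap.id_apply]

theorem LinearMap.isNilpotent_of_charpoly_smul_eq [IsDomain R] {f : End R M} {a : R}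
    (ha : ¬ IsOfFinOrder a) (h : (a • f).charpoly = f.charpoly) : IsNilpotent f := by
  have hcoeff : ∀ i < finrank R M, f.charpoly.coeff i = 0 := fun i hi => by
    have hscale := f.charpoly_smul_coeff a (Nat.add_sub_cancel' hi.le)
    rw [h, eq_comm, ← sub_eq_zero, ← sub_one_mul, mul_eq_zero, sub_eq_zero] at hscale
    exact hscale.resolve_left fun h1 =>
      ha (isOfFinOrder_iff_pow_eq_one.mpr ⟨_, Nat.sub_pos_of_lt hi, h1⟩)
  rw [isNilpotent_iff_charpoly, ← f.charpoly_natDegree]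
  exact f.charpoly_monic.eq_X_pow_iff_natDegree_le_natTrailingDegree.mpr <|
    le_natTrailingDegree f.charpoly_monic.ne_zero (f.charpoly_natDegree ▸ hcoeff)

end charpoly

theorem stmt5_general {V : Type*} [NormedAddCommGroup V] [NormedSpace ℝ V] [FiniteDimensional ℝ V]
    (S : V → (V →L[ℝ] V)) (k : ℕ) (hk : 1 ≤ k)
    (hhom : ∀ c : ℝ, 0 < c → ∀ w : V, S (c • w) = c ^ k • S w)
    (v : V)
    (hiso : ∀ c : ℝ, c ≠ 0 → ∃ T : V ≃L[ℝ] V, T v = c • v ∧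
      S (c • v) = (T : V →L[ℝ] V).comp ((S v).comp (T.symm : V →L[ℝ] V))) :
    IsNilpotent (S v) := by
  obtain ⟨T, -, hT⟩ := hiso 2 two_ne_zero
  rw [hhom 2 two_pos v] at hT
  have hconj : (2 : ℝ) ^ k • (S v : End ℝ V) = T.toLinearEquiv.conj (S v) := by
    ext x
    simpa [LinearEquiv.conj_apply] using DFunLike.congr_fun hT x
  have hcharpoly : ((2 : ℝ) ^ k • (S v : End ℝ V)).charpoly = (S v : End ℝ V).charpoly := by
    rw [hconj, LinearEquiv.charpoly_conj]
  have hnot : ¬ IsOfFinOrder ((2 : ℝ) ^ k) := not_isOfFinOrder_of_injective_pow <|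
    pow_right_injective₀ (by positivity) (one_lt_pow₀ one_lt_two (by omega)).ne'
  exact (IsNilpotent.map_iff (f := ContinuousLinearMap.toLinearMapRingHom)
    ContinuousLinearMap.coe_injective).mp (LinearMap.isNilpotent_of_charpoly_smul_eq hnot hcharpoly)

theorem stmt5 {V : Type*} [NormedAddCommGroup V] [NormedSpace ℝ V] [FiniteDimensional ℝ V]
    (S : V → (V →L[ℝ] V)) (hS : Continuous S) (k : ℕ) (hk : 1 ≤ k)
    (hhom : ∀ c : ℝ, 0 < c → ∀ w : V, S (c • w) = c ^ k • S w)
    (v : V)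
    (hiso : ∀ c : ℝ, c ≠ 0 → ∃ T : V ≃L[ℝ] V, T v = c • v ∧
      S (c • v) = (T : V →L[ℝ] V).comp ((S v).comp (T.symm : V →L[ℝ] V))) :
    IsNilpotent (S v) :=
  stmt5_general S k hk hhom v hiso
end

section
/- Let V be a finite-dimensional real vector space with a nondegenerate symmetric bilinear form B, let Φ : V → V be a linear involution such that g(v,w) := B(v, Φw) is a positive definite inner product, and let A : V → V be B-self-adjoint with A³ = 0. Then rank(A Φ A²) = rank(A² Φ A²) = rank(A²), and A restricts to a linear isomorphism from Im(A Φ A²) onto Im(A²). -/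
theorem stmt7 {V : Type*} [AddCommGroup V] [Module ℝ V] [FiniteDimensional ℝ V]
    (B : V →ₗ[ℝ] V →ₗ[ℝ] ℝ)
    (hsymm : ∀ x y, B x y = B y x)
    (hnd : ∀ x, (∀ y, B x y = 0) → x = 0)
    (Φ : V →ₗ[ℝ] V) (hinv : Φ ∘ₗ Φ = LinearMap.id)
    (hcompat : ∀ v w, B v (Φ w) = B (Φ v) w)
    (hpos : ∀ v, v ≠ 0 → 0 < B v (Φ v))
    (A : V →ₗ[ℝ] V)
    (hsa : ∀ x y, B (A x) y = B x (A y))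
    (h3 : A ∘ₗ A ∘ₗ A = 0) :
    (Module.finrank ℝ (LinearMap.range (A ∘ₗ Φ ∘ₗ A ∘ₗ A)) =
        Module.finrank ℝ (LinearMap.range (A ∘ₗ A)) ∧
      Module.finrank ℝ (LinearMap.range (A ∘ₗ A ∘ₗ Φ ∘ₗ A ∘ₗ A)) =
        Module.finrank ℝ (LinearMap.range (A ∘ₗ A))) ∧
    (Submodule.map A (LinearMap.range (A ∘ₗ Φ ∘ₗ A ∘ₗ A)) = LinearMap.range (A ∘ₗ A) ∧
      ∀ x ∈ LinearMap.range (A ∘ₗ Φ ∘ₗ A ∘ₗ A), A x = 0 → x = 0) := by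
  -- key: A Φ A² x = 0 → A² x = 0
  have k1 : ∀ x : V, A (Φ (A (A x))) = 0 → A (A x) = 0 := by
    intro x h
    by_contra hne
    have hp := hpos (A (A x)) hne
    have hz : B (A (A x)) (Φ (A (A x))) = 0 := by
      rw [hsa, h, map_zero]
    linarith
  -- key: A² Φ A² x = 0 → A² x = 0
  have k2 : ∀ x : V, A (A (Φ (A (A x)))) = 0 → A (A x) = 0 := by
    intro x h
    by_contra hne
    have hp := hpos (A (A x)) hne
    have hz : B (A (A x)) (Φ (A (A x))) = 0 := by
      rw [hsa, hsa, h, map_zero]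
    linarith
  -- kernel equalities
  have hker1 : LinearMap.ker (A ∘ₗ Φ ∘ₗ A ∘ₗ A) = LinearMap.ker (A ∘ₗ A) := by
    ext x
    simp only [LinearMap.mem_ker, LinearMap.comp_apply]
    constructor
    · exact k1 x
    · intro h; rw [h, map_zero, map_zero]
  have hker2 : LinearMap.ker (A ∘ₗ A ∘ₗ Φ ∘ₗ A ∘ₗ A) = LinearMap.ker (A ∘ₗ A) := by
    ext x
    simp only [LinearMap.mem_ker, LinearMap.comp_apply]
    constructor
    · exact k2 x
    · intro h; rw [h, map_zero, map_zero, map_zero]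
  -- rank equalities from rank-nullity
  have r1 := LinearMap.finrank_range_add_finrank_ker (A ∘ₗ Φ ∘ₗ A ∘ₗ A)
  have r2 := LinearMap.finrank_range_add_finrank_ker (A ∘ₗ A ∘ₗ Φ ∘ₗ A ∘ₗ A)
  have r3 := LinearMap.finrank_range_add_finrank_ker (A ∘ₗ A)
  rw [hker1] at r1
  rw [hker2] at r2
  have hr1 : Module.finrank ℝ (LinearMap.range (A ∘ₗ Φ ∘ₗ A ∘ₗ A)) =
      Module.finrank ℝ (LinearMap.range (A ∘ₗ A)) := by omega
  have hr2 : Module.finrank ℝ (LinearMap.range (A ∘ₗ A ∘ₗ Φ ∘ₗ A ∘ₗ A)) =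
      Module.finrank ℝ (LinearMap.range (A ∘ₗ A)) := by omega
  refine ⟨⟨hr1, hr2⟩, ?_, ?_⟩
  · -- map A (range (A Φ A²)) = range A²
    have hmap : Submodule.map A (LinearMap.range (A ∘ₗ Φ ∘ₗ A ∘ₗ A)) =
        LinearMap.range (A ∘ₗ A ∘ₗ Φ ∘ₗ A ∘ₗ A) := by
      rw [← LinearMap.range_comp]
    rw [hmap]
    apply Submodule.eq_of_le_of_finrank_eq
    · rintro _ ⟨x, rfl⟩
      exact ⟨Φ (A (A x)), rfl⟩
    · exact hr2
  · rintro _ ⟨x, rfl⟩ h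
    have : A (A x) = 0 := k2 x h
    simp only [LinearMap.comp_apply, this, map_zero]
end

section
/- Let V be a finite-dimensional real vector space with nondegenerate symmetric bilinear form B, Φ as above with g(v,w) = B(v,Φw) positive definite, and A a B-self-adjoint operator with A³ = 0. Then the restriction of B to the subspace Im(A Φ A²) is nondegenerate. -/
theorem stmt9 {V : Type*} [AddCommGroup V] [Module ℝ V] [FiniteDimensional ℝ V]
    (B : V →ₗ[ℝ] V →ₗ[ℝ] ℝ)
    (hsymm : ∀ x y, B x y = B y x)
    (hnd : ∀ x, (∀ y, B x y = 0) → x = 0)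
    (Φ : V →ₗ[ℝ] V)
    (hcompat : ∀ v w, B v (Φ w) = B (Φ v) w)
    (hpos : ∀ v, v ≠ 0 → 0 < B v (Φ v))
    (A : V →ₗ[ℝ] V)
    (hsa : ∀ x y, B (A x) y = B x (A y))
    (h3 : A ∘ₗ A ∘ₗ A = 0) :
    ∀ x, A (Φ (A (A x))) ≠ 0 →
      ∃ y, B (A (Φ (A (A x)))) (A (Φ (A (A y)))) ≠ 0 := by
  intro x hx
  set u := Φ (A (A x)) with hu
  have hA2x : A (A x) ≠ 0 := by
    intro h
    apply hx
    rw [hu, h, map_zero, map_zero]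
  refine ⟨u, ?_⟩
  have hAAu : A (A u) ≠ 0 := by
    intro h
    have h1 : B (A (A x)) u = 0 := by
      rw [hsa (A x) u, hsa x (A u), h, map_zero]
    exact absurd h1 (ne_of_gt (hpos _ hA2x))
  have key : B (A u) (A (Φ (A (A u)))) = B (A (A u)) (Φ (A (A u))) :=
    (hsa (A u) (Φ (A (A u)))).symm
  rw [key]
  exact (hpos _ hAAu).ne'
end

section
/- Let V be a real inner product space of signature (p,q) (nondegenerate symmetric bilinear form Q(v) = (v,v)), with p, q ≥ 1 and p + q ≥ 3, and let x : V → ℝ be a polynomial function that vanishes on the entire null cone N = {v : Q(v) = 0}. Then Q divides x in the ring of polynomial functions on V: there is a polynomial y with x = Q·y. -/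
/-!
Single out a negative variable: `Q = -x₀² + S(x')`. Dividing `x`, viewed as a polynomial in `x₀`,
by the monic `x₀² - S` leaves a remainder `a(x') x₀ + b(x')`. Wherever `S(x') > 0` this remainder
vanishes at the two distinct points `x₀ = ±√S(x')`, so `a` and `b` vanish on the nonempty open set
`{S > 0}` (nonempty because some variable has positive sign), hence are zero.
-/

open Polynomial

theorem MvPolynomial.eq_zero_of_eval_eq_zero_on_open {σ : Type*} [Fintype σ]
    {f : MvPolynomial σ ℝ} {U : Set (σ → ℝ)} (hU : IsOpen U) (hne : U.Nonempty)
    (h : ∀ v ∈ U, eval v f = 0) : f = 0 := by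
  obtain ⟨c, hc⟩ := hne
  obtain ⟨ε, hε, hball⟩ := Metric.isOpen_iff.1 hU c hc
  refine funext_set (fun i ↦ Set.Ioo (c i - ε) (c i + ε))
    (fun i ↦ Set.Ioo_infinite (by linarith)) fun v hv ↦ ?_
  rw [map_zero]
  refine h v (hball ((dist_pi_lt_iff hε).2 fun i ↦ ?_))
  rw [Real.dist_eq, abs_sub_lt_iff]
  obtain ⟨h₁, h₂⟩ := hv i trivial
  constructor <;> linarith

theorem Polynomial.eq_zero_of_map_eval_eq_zero_on_open {σ : Type*} [Fintype σ]
    {r : (MvPolynomial σ ℝ)[X]} {U : Set (σ → ℝ)} (hU : IsOpen U) (hne : U.Nonempty)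
    (h : ∀ v ∈ U, r.map (MvPolynomial.eval v) = 0) : r = 0 := by
  refine Polynomial.ext fun k ↦ ?_
  rw [coeff_zero]
  refine MvPolynomial.eq_zero_of_eval_eq_zero_on_open hU hne fun v hv ↦ ?_
  rw [← coeff_map, h v hv, coeff_zero]

theorem Polynomial.X_sq_sub_C_dvd_of_eval_eq_zero {σ : Type*} [Fintype σ] {S : MvPolynomial σ ℝ}
    (hS : ∃ v, 0 < MvPolynomial.eval v S) {P : (MvPolynomial σ ℝ)[X]}
    (hP : ∀ v t, t ^ 2 = MvPolynomial.eval v S → (P.map (MvPolynomial.eval v)).eval t = 0) :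
    X ^ 2 - C S ∣ P := by
  have hD : (X ^ 2 - C S).Monic := monic_X_pow_sub_C S two_ne_zero
  have hD1 : X ^ 2 - C S ≠ 1 := fun h ↦ by
    simpa [h] using natDegree_X_pow_sub_C (n := 2) (r := S)
  set r := P %ₘ (X ^ 2 - C S)
  have hr : ∀ v t, t ^ 2 = MvPolynomial.eval v S → (r.map (MvPolynomial.eval v)).eval t = 0 := by
    intro v t ht
    simp [r, modByMonic_eq_sub_mul_div, hP v t ht, ht]
  rw [← modByMonic_eq_zero_iff_dvd hD]
  refine eq_zero_of_map_eval_eq_zero_on_open (U := {v | 0 < MvPolynomial.eval v S})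
    (isOpen_lt continuous_const (MvPolynomial.continuous_eval S)) hS fun v hv ↦ ?_
  have hs := Real.sq_sqrt (le_of_lt hv)
  have hne : Real.sqrt (MvPolynomial.eval v S) ≠ -Real.sqrt (MvPolynomial.eval v S) := by
    have := Real.sqrt_pos.2 hv
    linarith
  refine eq_zero_of_natDegree_lt_card_of_eval_eq_zero' _
    {Real.sqrt (MvPolynomial.eval v S), -Real.sqrt (MvPolynomial.eval v S)} ?_ ?_
  · simp only [Finset.mem_insert, Finset.mem_singleton]
    rintro t (rfl | rfl)
    · exact hr v _ hs
    · exact hr v _ (by rw [neg_sq, hs])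
  · rw [Finset.card_pair hne]
    calc (r.map (MvPolynomial.eval v)).natDegree ≤ r.natDegree := natDegree_map_le
      _ < (X ^ 2 - C S).natDegree := natDegree_modByMonic_lt P hD hD1
      _ = 2 := natDegree_X_pow_sub_C

theorem MvPolynomial.finSuccEquiv_sum_C_mul_X_sq {n : ℕ} (w : Fin (n + 1) → ℝ) :
    finSuccEquiv ℝ n (∑ i, MvPolynomial.C (w i) * MvPolynomial.X i ^ 2) =
      Polynomial.C (MvPolynomial.C (w 0)) * Polynomial.X ^ 2 +
        Polynomial.C (∑ i : Fin n, MvPolynomial.C (w i.succ) * MvPolynomial.X i ^ 2) := by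
  simp [Fin.sum_univ_succ, finSuccEquiv_apply]

theorem MvPolynomial.sum_C_mul_X_sq_dvd_of_eval_eq_zero {n : ℕ} {w : Fin (n + 1) → ℝ}
    (hw₀ : w 0 = -1) (hw : ∃ i, 0 < w i) {f : MvPolynomial (Fin (n + 1)) ℝ}
    (hf : ∀ v, eval v (∑ i, C (w i) * X i ^ 2) = 0 → eval v f = 0) :
    ∑ i, C (w i) * X i ^ 2 ∣ f := by
  set S : MvPolynomial (Fin n) ℝ := ∑ i : Fin n, C (w i.succ) * X i ^ 2
  have hQS : finSuccEquiv ℝ n (∑ i, C (w i) * X i ^ 2) = -(Polynomial.X ^ 2 - Polynomial.C S) := by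
    rw [finSuccEquiv_sum_C_mul_X_sq, hw₀]
    simp [S, map_sum]
    ring
  have hS : ∃ v, 0 < eval v S := by
    obtain ⟨i, hi⟩ := hw
    obtain ⟨j, rfl⟩ := Fin.exists_succ_eq.2 (fun h : i = 0 ↦ by rw [h, hw₀] at hi; linarith)
    refine ⟨Pi.single j 1, ?_⟩
    simpa [S, Pi.single_apply] using hi
  have hdvd : Polynomial.X ^ 2 - Polynomial.C S ∣ finSuccEquiv ℝ n f := by
    refine Polynomial.X_sq_sub_C_dvd_of_eval_eq_zero hS fun v t ht ↦ ?_
    rw [← eval_eq_eval_mv_eval']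
    refine hf _ ?_
    rw [eval_eq_eval_mv_eval', hQS]
    simp [ht]
  rw [← map_dvd_iff (finSuccEquiv ℝ n), hQS]
  exact neg_dvd.2 hdvd

theorem stmt18_general (p q : ℕ) (hp : 1 ≤ p) (hq : 1 ≤ q)
    (Q : MvPolynomial (Fin (p + q)) ℝ)
    (hQ : Q = ∑ i : Fin (p + q),
        (if (i : ℕ) < p then (-1 : MvPolynomial (Fin (p + q)) ℝ) else 1) *
          (MvPolynomial.X i) ^ 2)
    (x : MvPolynomial (Fin (p + q)) ℝ)
    (hx : ∀ v : Fin (p + q) → ℝ, MvPolynomial.eval v Q = 0 → MvPolynomial.eval v x = 0) :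
    Q ∣ x := by
  obtain ⟨q, rfl⟩ : ∃ q', q = q' + 1 := ⟨q - 1, by omega⟩
  let w : Fin (p + (q + 1)) → ℝ := fun i ↦ if (i : ℕ) < p then -1 else 1
  have hQw : Q = ∑ i, MvPolynomial.C (w i) * MvPolynomial.X i ^ 2 := by
    simp [hQ, w, apply_ite]
  subst hQw
  exact MvPolynomial.sum_C_mul_X_sq_dvd_of_eval_eq_zero (if_pos hp)
    ⟨Fin.last _, by simp [w]⟩ hx

theorem stmt18 (p q : ℕ) (hp : 1 ≤ p) (hq : 1 ≤ q) (hpq : 3 ≤ p + q)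
    (Q : MvPolynomial (Fin (p + q)) ℝ)
    (hQ : Q = ∑ i : Fin (p + q),
        (if (i : ℕ) < p then (-1 : MvPolynomial (Fin (p + q)) ℝ) else 1) *
          (MvPolynomial.X i) ^ 2)
    (x : MvPolynomial (Fin (p + q)) ℝ)
    (hx : ∀ v : Fin (p + q) → ℝ, MvPolynomial.eval v Q = 0 → MvPolynomial.eval v x = 0) :
    Q ∣ x :=
  stmt18_general p q hp hq Q hQ x hx
end
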